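/- Let X be a compact topological space endowed with two continuous functions φ: X → ℝⁿ and ψ: X → ℝⁿ. Then for every integer k, d_T(H_k^{(X,φ)}, H_k^{(X,ψ)}) ≤ ‖φ − ψ‖_∞; that is, the pseudo-distance d_T is stable with respect to perturbations of the filtering function measured by the max-norm. -/

import Mathlib

open CategoryTheory

/-- The "chains with coefficients in `G`" functor `S ↦ S →₀ G`. -/
@[simps]
noncomputable def coeffFunctor (G : Type) [AddCommGroup G] : Type ⥤ AddCommGrpCat where
  obj S := AddCommGrpCat.of (S →₀ G)
  map f := AddCommGrpCat.ofHom (Finsupp.mapDomain.addMonoidHom f)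
  map_id S := AddCommGrpCat.hom_ext Finsupp.mapDomain.addMonoidHom_id
  map_comp f g := AddCommGrpCat.hom_ext (Finsupp.mapDomain.addMonoidHom_comp g f)

/-- The singular chain complex with coefficients in the abelian group `G`. -/
noncomputable def singularChainComplexFunctor (G : Type) [AddCommGroup G] :
    TopCat.{0} ⥤ ChainComplex AddCommGrpCat ℕ :=
  TopCat.toSSet ⋙ ((SimplicialObject.whiskering (Type 0) AddCommGrpCat).obj (coeffFunctor G)) ⋙
    AlgebraicTopology.alternatingFaceMapComplex AddCommGrpCat

/-- Singular homology with coefficients in `G`, in degree `k : ℤ` (trivial in negative degrees). -/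
noncomputable def singularHomologyFunctor (G : Type) [AddCommGroup G] (k : ℤ) :
    TopCat.{0} ⥤ AddCommGrpCat :=
  if 0 ≤ k then
    singularChainComplexFunctor G ⋙ HomologicalComplex.homologyFunctor AddCommGrpCat _ k.toNat
  else (Functor.const _).obj (AddCommGrpCat.of PUnit)

/-- The sublevel set `X⟨φ ≼ u⟩`. -/
def sublevelSet {n : ℕ} {X : Type} (φ : X → Fin n → ℝ) (u : Fin n → ℝ) : Set X :=
  {x | ∀ i, φ x i ≤ u i}

/-- The sublevel set as a topological space. -/
def sublevelTop {n : ℕ} {X : Type} [TopologicalSpace X] (φ : X → Fin n → ℝ)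
    (u : Fin n → ℝ) : TopCat.{0} :=
  TopCat.of (sublevelSet φ u)

/-- The inclusion of sublevel sets. -/
def sublevelIncl {n : ℕ} {X : Type} [TopologicalSpace X] (φ : X → Fin n → ℝ)
    {u v : Fin n → ℝ} (h : ∀ i, u i ≤ v i) : sublevelTop φ u ⟶ sublevelTop φ v :=
  TopCat.ofHom (ContinuousMap.mk
    (Set.inclusion (s := sublevelSet φ u) (t := sublevelSet φ v)
      (fun _x hx i => le_trans (hx i) (h i)))
    (continuous_inclusion _))

/-- The multidimensional `k`-th persistent homology group of `(X, φ)` at `(u, v)`,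
with coefficients in the abelian group `G`: the image of the homomorphism induced
in homology by the inclusion of sublevel sets. -/
noncomputable def persistentHomologyGroup (G : Type) [AddCommGroup G] (k : ℤ)
    {n : ℕ} {X : Type} [TopologicalSpace X] (φ : X → Fin n → ℝ)
    {u v : Fin n → ℝ} (h : ∀ i, u i ≤ v i) : Type :=
  AddMonoidHom.range ((singularHomologyFunctor G k).map (sublevelIncl φ h)).hom

noncomputable instance (G : Type) [AddCommGroup G] (k : ℤ)
    {n : ℕ} {X : Type} [TopologicalSpace X] (φ : X → Fin n → ℝ)
    {u v : Fin n → ℝ} (h : ∀ i, u i ≤ v i) :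
    AddCommGroup (persistentHomologyGroup G k φ h) := by
  unfold persistentHomologyGroup; infer_instance

/-- There is a surjective homomorphism from a subgroup of `A` onto `B`. -/
def ExistsSurjHomFromSubgroup (A B : Type) [AddCommGroup A] [AddCommGroup B] : Prop :=
  ∃ (S : AddSubgroup A) (f : S →+ B), Function.Surjective f

/-- The set `E` of all `ε ≥ 0` such that, for every `(u,v) ∈ Δ⁺`, surjective homomorphisms
exist from a subgroup of `H_k^{(X,φ)}(u,v)` onto `H_k^{(Y,ψ)}(u-ε⃗,v+ε⃗)` and from a subgroup of
`H_k^{(Y,ψ)}(u,v)` onto `H_k^{(X,φ)}(u-ε⃗,v+ε⃗)`. -/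
def dTSet (G : Type) [AddCommGroup G] (k : ℤ) {n : ℕ} {X Y : Type}
    [TopologicalSpace X] [TopologicalSpace Y]
    (φ : X → Fin n → ℝ) (ψ : Y → Fin n → ℝ) : Set ℝ :=
  {ε | ∃ hε : 0 ≤ ε, ∀ u v : Fin n → ℝ, ∀ h : ∀ i, u i < v i,
    ExistsSurjHomFromSubgroup
      (persistentHomologyGroup G k φ (fun i => (h i).le))
      (persistentHomologyGroup G k ψ
        (u := fun i => u i - ε) (v := fun i => v i + ε)
        (fun i => by have := (h i).le; linarith)) ∧
    ExistsSurjHomFromSubgroup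
      (persistentHomologyGroup G k ψ (fun i => (h i).le))
      (persistentHomologyGroup G k φ
        (u := fun i => u i - ε) (v := fun i => v i + ε)
        (fun i => by have := (h i).le; linarith))}

/-- The pseudo-distance `d_T` between the `k`-th persistent homology groups of `(X,φ)`
and `(Y,ψ)`: the infimum of the set `E` (`∞` if `E` is empty). -/
noncomputable def dT (G : Type) [AddCommGroup G] (k : ℤ) {n : ℕ} {X Y : Type}
    [TopologicalSpace X] [TopologicalSpace Y]
    (φ : X → Fin n → ℝ) (ψ : Y → Fin n → ℝ) : ENNReal :=
  sInf (ENNReal.ofReal '' dTSet G k φ ψ)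

/-- The sup-norm (max-norm) distance between two `ℝⁿ`-valued functions. -/
noncomputable def supNormDist {n : ℕ} {X : Type} (φ ψ : X → Fin n → ℝ) : ENNReal :=
  ⨆ (x : X) (i : Fin n), ENNReal.ofReal |φ x i - ψ x i|

/-- The natural pseudo-distance between `(X,φ)` and `(Y,ψ)`:
`inf_h ‖φ - ψ ∘ h‖_∞` over all homeomorphisms `h : X → Y` (`∞` if none exists). -/
noncomputable def naturalPseudoDistance {n : ℕ} {X Y : Type}
    [TopologicalSpace X] [TopologicalSpace Y]
    (φ : X → Fin n → ℝ) (ψ : Y → Fin n → ℝ) : ENNReal :=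
  ⨅ (h : X ≃ₜ Y), supNormDist φ (fun x => ψ (h x))

/-!
If `|φ - ψ| ≤ ε` pointwise, then `X⟨ψ ≼ u - ε⃗⟩ ⊆ X⟨φ ≼ u⟩` and `X⟨φ ≼ v⟩ ⊆ X⟨ψ ≼ v + ε⃗⟩`, so the
inclusion `X⟨ψ ≼ u - ε⃗⟩ ⊆ X⟨ψ ≼ v + ε⃗⟩` factors through `X⟨φ ≼ u⟩ ⊆ X⟨φ ≼ v⟩`. By functoriality
`H_k^{(X,ψ)}(u - ε⃗, v + ε⃗)` is then the image under a homomorphism of a subgroup of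
`H_k^{(X,φ)}(u, v)`, and symmetrically; so every `ε ≥ ‖φ - ψ‖_∞` lies in the set defining `d_T`.
-/

theorem existsSurjHomFromSubgroup_range_comp {A B C D : Type} [AddCommGroup A] [AddCommGroup B]
    [AddCommGroup C] [AddCommGroup D] (p : A →+ B) (q : B →+ C) (r : C →+ D) :
    ExistsSurjHomFromSubgroup q.range (r.comp (q.comp p)).range := by
  let S : AddSubgroup q.range := (q.comp p).range.comap q.range.subtype
  refine ⟨S, (r.comp (q.range.subtype.comp S.subtype)).codRestrict _ ?_, ?_⟩
  · rintro ⟨_, a, ha⟩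
    exact ⟨a, congrArg r ha⟩
  · rintro ⟨_, a, rfl⟩
    exact ⟨⟨⟨q (p a), p a, rfl⟩, a, rfl⟩, rfl⟩

def sublevelInclOfSubset {n : ℕ} {X : Type} [TopologicalSpace X] {φ ψ : X → Fin n → ℝ}
    {u w : Fin n → ℝ} (h : sublevelSet φ u ⊆ sublevelSet ψ w) :
    sublevelTop φ u ⟶ sublevelTop ψ w :=
  TopCat.ofHom ⟨Set.inclusion h, continuous_inclusion h⟩

theorem sublevelSet_subset_of_le_add {n : ℕ} {X : Type} {φ ψ : X → Fin n → ℝ} {ε : ℝ}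
    (hψφ : ∀ x i, ψ x i ≤ φ x i + ε) {u w : Fin n → ℝ} (huw : ∀ i, u i + ε ≤ w i) :
    sublevelSet φ u ⊆ sublevelSet ψ w :=
  fun x hx i => (hψφ x i).trans <| (add_le_add_left (hx i) ε).trans (huw i)

theorem existsSurjHomFromSubgroup_persistentHomologyGroup_of_abs_sub_le (G : Type)
    [AddCommGroup G] (k : ℤ) {n : ℕ} {X : Type} [TopologicalSpace X] {φ ψ : X → Fin n → ℝ}
    {ε : ℝ} (hφψ : ∀ x i, |φ x i - ψ x i| ≤ ε) {u v : Fin n → ℝ} (huv : ∀ i, u i ≤ v i)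
    (huv' : ∀ i, u i - ε ≤ v i + ε) :
    ExistsSurjHomFromSubgroup (persistentHomologyGroup G k φ huv)
      (persistentHomologyGroup G k ψ huv') := by
  have hlow : sublevelSet ψ (fun i => u i - ε) ⊆ sublevelSet φ u :=
    sublevelSet_subset_of_le_add (fun x i => by linarith [(abs_le.mp (hφψ x i)).2])
      (fun i => by linarith)
  have hhigh : sublevelSet φ v ⊆ sublevelSet ψ (fun i => v i + ε) :=
    sublevelSet_subset_of_le_add (fun x i => by linarith [(abs_le.mp (hφψ x i)).1])
      (fun i => le_rfl)
  have hfactor : sublevelIncl ψ huv' =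
      sublevelInclOfSubset hlow ≫ sublevelIncl φ huv ≫ sublevelInclOfSubset hhigh := rfl
  show ExistsSurjHomFromSubgroup
    ((singularHomologyFunctor G k).map (sublevelIncl φ huv)).hom.range
    ((singularHomologyFunctor G k).map (sublevelIncl ψ huv')).hom.range
  rw [hfactor, Functor.map_comp, Functor.map_comp]
  exact existsSurjHomFromSubgroup_range_comp _ _ _

theorem mem_dTSet_of_abs_sub_le (G : Type) [AddCommGroup G] (k : ℤ) {n : ℕ} {X : Type}
    [TopologicalSpace X] {φ ψ : X → Fin n → ℝ} {ε : ℝ} (hε : 0 ≤ ε)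
    (hφψ : ∀ x i, |φ x i - ψ x i| ≤ ε) : ε ∈ dTSet G k φ ψ :=
  have hψφ : ∀ x i, |ψ x i - φ x i| ≤ ε := fun x i => abs_sub_comm (φ x i) _ ▸ hφψ x i
  ⟨hε, fun _ _ _ =>
    ⟨existsSurjHomFromSubgroup_persistentHomologyGroup_of_abs_sub_le G k hφψ _ _,
     existsSurjHomFromSubgroup_persistentHomologyGroup_of_abs_sub_le G k hψφ _ _⟩⟩

theorem abs_sub_le_toReal_supNormDist {n : ℕ} {X : Type} {φ ψ : X → Fin n → ℝ}
    (h : supNormDist φ ψ ≠ ⊤) (x : X) (i : Fin n) :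
    |φ x i - ψ x i| ≤ (supNormDist φ ψ).toReal :=
  (ENNReal.ofReal_le_iff_le_toReal h).mp <|
    le_iSup₂ (f := fun x i => ENNReal.ofReal |φ x i - ψ x i|) x i

theorem dT_le_supNormDist_general (G : Type) [AddCommGroup G] (k : ℤ) (n : ℕ)
    {X : Type} [TopologicalSpace X]
    (φ ψ : X → Fin n → ℝ) :
    dT G k φ ψ ≤ supNormDist φ ψ := by
  rcases eq_or_ne (supNormDist φ ψ) ⊤ with htop | htop
  · exact htop ▸ le_top
  have hmem : (supNormDist φ ψ).toReal ∈ dTSet G k φ ψ :=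
    mem_dTSet_of_abs_sub_le G k ENNReal.toReal_nonneg (abs_sub_le_toReal_supNormDist htop)
  calc dT G k φ ψ ≤ ENNReal.ofReal (supNormDist φ ψ).toReal := sInf_le ⟨_, hmem, rfl⟩
    _ = supNormDist φ ψ := ENNReal.ofReal_toReal htop

/-- **Corollary (stability of `d_T`).** Let `X` be a compact topological space endowed with
two continuous functions `φ, ψ : X → ℝⁿ`. Then, for every integer `k`,
`d_T(H_k^{(X,φ)}, H_k^{(X,ψ)}) ≤ ‖φ − ψ‖_∞`. -/
theorem dT_le_supNormDist (G : Type) [AddCommGroup G] (k : ℤ) (n : ℕ)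
    {X : Type} [TopologicalSpace X] [CompactSpace X]
    (φ ψ : X → Fin n → ℝ) (hφ : Continuous φ) (hψ : Continuous ψ) :
    dT G k φ ψ ≤ supNormDist φ ψ :=
  dT_le_supNormDist_general G k n φ ψ
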